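/- arXiv:2401.11321 — 6 statements merged into one kernel-verified Lean document; each statement's English description precedes it below -/
import Mathlib

section
/- Let H be a real Hilbert space, r > 0, and x̄ ∈ H with ‖x̄‖ = r. If z ∈ H and z ≠ 0, then z ∉ D̂*P_{rB}(x̄)(0); consequently D̂*P_{rB}(x̄)(0) = {0}. -/
/-!
Along the ray `u = xb + t • z`, `t ↓ 0`, the numerator of the quotient with `y = 0` is
`t * ‖z‖ ^ 2`. Since `xb` lies in the ball, `ballProj r u` is no farther from `u` than `xb` is,
so `‖ballProj r u - xb‖ ≤ 2 * t * ‖z‖` and the quotient stays above `‖z‖ / 3`; hence its limsup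
is positive. For `z = 0` the quotient vanishes identically.
-/

open scoped RealInnerProductSpace
open Filter

variable {H : Type*} [NormedAddCommGroup H] [InnerProductSpace ℝ H]

/-- The metric projection onto the closed ball of radius `r` centered at the origin. -/
noncomputable def ballProj (r : ℝ) (u : H) : H :=
  if ‖u‖ ≤ r then u else (r / ‖u‖) • u

/-- The difference quotient appearing in the definition of the Mordukhovich (Fréchet)
coderivative of `ballProj r` at `xb`, evaluated at `x ∈ H` (candidate) and `y ∈ H`. -/
noncomputable def coderivQuot (r : ℝ) (xb x y : H) (u : H) : ℝ :=
  (⟪x, u - xb⟫ - ⟪y, ballProj r u - ballProj r xb⟫) /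
    (‖u - xb‖ + ‖ballProj r u - ballProj r xb‖)

open Topology

namespace ballProj

variable {r : ℝ} {u x : H}

theorem eq_self_of_norm_le (hx : ‖x‖ ≤ r) : ballProj r x = x := if_pos hx

theorem norm_sub_self_le (hx : ‖x‖ ≤ r) : ‖ballProj r u - u‖ ≤ ‖u - x‖ := by
  have hdist : ‖u‖ - r ≤ ‖u - x‖ := by linarith [norm_sub_norm_le u x]
  by_cases hu : ‖u‖ ≤ r
  · simp [ballProj, hu]
  · have hu_pos : 0 < ‖u‖ := by linarith [norm_nonneg x]
    calc ‖ballProj r u - u‖ = |r / ‖u‖ - 1| * ‖u‖ := by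
          rw [ballProj, if_neg hu, ← Real.norm_eq_abs, ← norm_smul, sub_smul, one_smul]
      _ = ‖u‖ - r := by
          rw [abs_of_nonpos (by rw [sub_nonpos, div_le_one hu_pos]; linarith)]
          field_simp
          ring
      _ ≤ ‖u - x‖ := hdist

theorem norm_sub_le_two_mul (hx : ‖x‖ ≤ r) :
    ‖ballProj r u - ballProj r x‖ ≤ 2 * ‖u - x‖ := by
  rw [eq_self_of_norm_le hx]
  linarith [norm_sub_le_norm_sub_add_norm_sub (ballProj r u) u x, norm_sub_self_le (u := u) hx]

end ballProj

namespace coderivQuot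

variable {r : ℝ} {xb z : H}

theorem zero_right_le_norm (u : H) : coderivQuot r xb z 0 u ≤ ‖z‖ := by
  rw [coderivQuot, inner_zero_left, sub_zero]
  rcases (add_nonneg (norm_nonneg (u - xb)) (norm_nonneg (ballProj r u - ballProj r xb))).eq_or_lt
    with hD | hD
  · rw [← hD, div_zero]; positivity
  · rw [div_le_iff₀ hD]
    nlinarith [real_inner_le_norm z (u - xb), norm_nonneg (ballProj r u - ballProj r xb),
      norm_nonneg z]

theorem zero_right_add_smul (hxb : ‖xb‖ ≤ r) (hz : z ≠ 0) {t : ℝ} (ht : 0 < t) :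
    ‖z‖ / 3 ≤ coderivQuot r xb z 0 (xb + t • z) := by
  have hproj := ballProj.norm_sub_le_two_mul (u := xb + t • z) hxb
  have hz_pos : 0 < ‖z‖ := norm_pos_iff.mpr hz
  rw [add_sub_cancel_left, norm_smul, Real.norm_of_nonneg ht.le] at hproj
  rw [coderivQuot, add_sub_cancel_left, inner_zero_left, sub_zero, real_inner_smul_right,
    real_inner_self_eq_norm_sq, norm_smul, Real.norm_of_nonneg ht.le,
    le_div_iff₀ (by positivity)]
  nlinarith [mul_pos ht hz_pos]

end coderivQuot

theorem tendsto_add_smul_nhdsGT_zero {x z : H} (hz : z ≠ 0) :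
    Tendsto (fun t : ℝ => x + t • z) (𝓝[>] 0) (𝓝[≠] x) := by
  refine tendsto_nhdsWithin_of_tendsto_nhds_of_eventually_within _ ?_ ?_
  · have hcont : Continuous fun t : ℝ => x + t • z := by fun_prop
    simpa using (hcont.tendsto 0).mono_left nhdsWithin_le_nhds
  · filter_upwards [self_mem_nhdsWithin] with t (ht : 0 < t)
    simp [ht.ne', hz]

theorem le_limsup_coderivQuot_zero_right {r : ℝ} {xb z : H} (hxb : ‖xb‖ ≤ r) (hz : z ≠ 0) :
    ‖z‖ / 3 ≤ limsup (coderivQuot r xb z 0) (𝓝[≠] xb) := by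
  refine le_limsup_of_frequently_le ?_ (isBoundedUnder_of ⟨‖z‖, coderivQuot.zero_right_le_norm⟩)
  refine (tendsto_add_smul_nhdsGT_zero hz).frequently (Eventually.frequently ?_)
  filter_upwards [self_mem_nhdsWithin] with t ht
  exact coderivQuot.zero_right_add_smul hxb hz ht

/-- Theorem 3.1(iii)(a) / Corollary 3.2(III)(a): for `‖xb‖ = r`, `D̂*P_{rB}(xb)(0) = {0}`. -/
theorem stmt11 (r : ℝ) (hr : 0 < r) (xb : H) (hxb : ‖xb‖ = r) :
    (∀ z : H, z ≠ 0 →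
      ¬ Filter.limsup (coderivQuot r xb z (0 : H)) (nhdsWithin xb {xb}ᶜ) ≤ (0 : ℝ)) ∧
    {z : H | Filter.limsup (coderivQuot r xb z (0 : H)) (nhdsWithin xb {xb}ᶜ) ≤ (0 : ℝ)}
      = {0} := by
  have not_mem : ∀ z : H, z ≠ 0 →
      ¬ limsup (coderivQuot r xb z 0) (𝓝[≠] xb) ≤ 0 := fun z hz hle => by
    have := le_limsup_coderivQuot_zero_right hxb.le hz
    linarith [norm_pos_iff.mpr hz]
  refine ⟨not_mem, Set.eq_singleton_iff_unique_mem.mpr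
    ⟨?_, fun z hz => not_not.mp (not_mem z · hz)⟩⟩
  -- makes `𝓝[≠] xb` nontrivial, so the limsup of the zero quotient is `0`
  have : Nontrivial H := nontrivial_of_ne xb 0 (norm_pos_iff.mp (hxb ▸ hr))
  have hquot : coderivQuot r xb 0 0 = fun _ => 0 := by
    ext u; simp [coderivQuot]
  simp [hquot]
end

section
/- Let H be a real Hilbert space, r > 0, and x̄ ∈ H with ‖x̄‖ = r. If y ∈ H satisfies y = (⟨y, x̄⟩/‖x̄‖²) x̄ and ⟨y, x̄⟩ < 0 (i.e., y is a negative scalar multiple of x̄), then 0 ∈ D̂*P_{rB}(x̄)(y). -/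
open scoped RealInnerProductSpace
open Filter

variable {H : Type*} [NormedAddCommGroup H] [InnerProductSpace ℝ H]

private lemma inner_ballProj_le (r : ℝ) (hr : 0 < r) (xb : H) (hxb : ‖xb‖ = r) (u : H) :
    ⟪xb, ballProj r u⟫ ≤ r ^ 2 := by
  unfold ballProj
  split_ifs with h
  · calc ⟪xb, u⟫ ≤ ‖xb‖ * ‖u‖ := real_inner_le_norm _ _
      _ ≤ r * r := by rw [hxb]; exact mul_le_mul_of_nonneg_left h hr.le
      _ = r ^ 2 := (sq r).symm
  · push_neg at h
    have hu : 0 < ‖u‖ := lt_trans hr h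
    rw [real_inner_smul_right]
    have h1 : ⟪xb, u⟫ ≤ r * ‖u‖ := by
      calc ⟪xb, u⟫ ≤ ‖xb‖ * ‖u‖ := real_inner_le_norm _ _
        _ = r * ‖u‖ := by rw [hxb]
    calc r / ‖u‖ * ⟪xb, u⟫ ≤ r / ‖u‖ * (r * ‖u‖) :=
          mul_le_mul_of_nonneg_left h1 (div_nonneg hr.le hu.le)
      _ = r ^ 2 := by field_simp
  
/-- One direction of Corollary 3.2(III)(b): for `‖xb‖ = r`, if `y` is a negative scalar
multiple of `xb` then `0 ∈ D̂*P_{rB}(xb)(y)`. -/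
theorem stmt12 (r : ℝ) (hr : 0 < r) (xb : H) (hxb : ‖xb‖ = r) (y : H)
    (hy : y = (⟪y, xb⟫ / ‖xb‖ ^ 2) • xb) (hy' : ⟪y, xb⟫ < 0) :
    Filter.limsup (coderivQuot r xb (0 : H) y) (nhdsWithin xb {xb}ᶜ) ≤ (0 : ℝ) := by
  have hle : ∀ u : H, coderivQuot r xb (0 : H) y u ≤ 0 := by
    intro u
    have hc : ⟪y, xb⟫ / ‖xb‖ ^ 2 < 0 :=
      div_neg_of_neg_of_pos hy' (by rw [hxb]; positivity)
    have hnum : (⟪(0 : H), u - xb⟫ - ⟪y, ballProj r u - ballProj r xb⟫) ≤ 0 := by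
      rw [inner_zero_left]
      have h1 : ⟪y, ballProj r u - ballProj r xb⟫ ≥ 0 := by
        rw [hy, real_inner_smul_left]
        have h2 : ⟪xb, ballProj r u - ballProj r xb⟫ ≤ 0 := by
          have hPxb : ballProj r xb = xb := by
            unfold ballProj; rw [if_pos (le_of_eq hxb)]
          rw [hPxb, inner_sub_right, real_inner_self_eq_norm_sq, hxb]
          have := inner_ballProj_le r hr xb hxb u
          linarith
        nlinarith [hc.le, h2]
      linarith
    exact div_nonpos_of_nonpos_of_nonneg hnum (by positivity)
  have hlb : ∀ u : H, -‖y‖ ≤ coderivQuot r xb (0 : H) y u := by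
    intro u
    unfold coderivQuot
    set d : ℝ := ‖u - xb‖ + ‖ballProj r u - ballProj r xb‖ with hd
    have hd0 : 0 ≤ d := by positivity
    rcases hd0.eq_or_lt with h | h
    · rw [← h, div_zero]; simp [norm_nonneg]
    · rw [le_div_iff₀ h]
      have h1 : |⟪y, ballProj r u - ballProj r xb⟫| ≤ ‖y‖ * d := by
        calc |⟪y, ballProj r u - ballProj r xb⟫| ≤ ‖y‖ * ‖ballProj r u - ballProj r xb‖ :=
              abs_real_inner_le_norm _ _
          _ ≤ ‖y‖ * d := by
              apply mul_le_mul_of_nonneg_left _ (norm_nonneg y)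
              rw [hd]; linarith [norm_nonneg (u - xb)]
      have := abs_le.mp h1
      rw [inner_zero_left]
      nlinarith [norm_nonneg y]
  have hxb0 : xb ≠ 0 := by intro h; rw [h, norm_zero] at hxb; linarith
  have : Nontrivial H := ⟨xb, 0, hxb0⟩
  have hne : (nhdsWithin xb {xb}ᶜ).NeBot := Module.punctured_nhds_neBot ℝ H xb
  apply Filter.limsup_le_of_le
  · have hb : Filter.IsBoundedUnder (· ≥ ·) (nhdsWithin xb {xb}ᶜ) (coderivQuot r xb (0 : H) y) :=
      ⟨-‖y‖, Filter.eventually_map.2 (Filter.Eventually.of_forall hlb)⟩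
    exact hb.isCoboundedUnder_le
  · exact Filter.Eventually.of_forall fun u => hle u
end

section
/- Let H be a real Hilbert space, r > 0, and x̄ ∈ H with ‖x̄‖ = r. Then D̂*P_{rB}(x̄)(x̄) = ∅; that is, no z ∈ H satisfies limsup_{u→x̄} (⟨z, u − x̄⟩ − ⟨x̄, P_{rB}(u) − x̄⟩)/(‖u − x̄‖ + ‖P_{rB}(u) − x̄‖) ≤ 0. -/
open scoped RealInnerProductSpace
open Filter

variable {H : Type*} [NormedAddCommGroup H] [InnerProductSpace ℝ H]

lemma ballProj_self (r : ℝ) (xb : H) (hxb : ‖xb‖ = r) : ballProj r xb = xb := by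
  simp [ballProj, hxb]

lemma quot_gt (r : ℝ) (hr : 0 < r) (xb z : H) (hxb : ‖xb‖ = r) {t : ℝ} (ht : 1 < t) :
    coderivQuot r xb z xb (t • xb) = ⟪z, xb⟫ / r := by
  have ht0 : 0 < t := lt_trans one_pos ht
  have hn : ‖t • xb‖ = t * r := by rw [norm_smul, Real.norm_of_nonneg ht0.le, hxb]
  have hgt : ¬ ‖t • xb‖ ≤ r := by
    rw [hn]; nlinarith
  have hproj : ballProj r (t • xb) = xb := by
    rw [ballProj, if_neg hgt, hn, smul_smul]
    have : r / (t * r) * t = 1 := by field_simp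
    rw [this, one_smul]
  have hsub : t • xb - xb = (t - 1) • xb := by rw [sub_smul, one_smul]
  rw [coderivQuot, hproj, ballProj_self r xb hxb, hsub, sub_self, inner_zero_right, norm_zero,
    norm_smul, Real.norm_of_nonneg (by linarith), hxb, real_inner_smul_right, sub_zero, add_zero,
    mul_div_mul_left _ _ (by linarith : t - 1 ≠ 0)]

lemma quot_lt (r : ℝ) (hr : 0 < r) (xb z : H) (hxb : ‖xb‖ = r) {t : ℝ} (ht0 : 0 < t)
    (ht : t < 1) :
    coderivQuot r xb z xb (t • xb) = (r ^ 2 - ⟪z, xb⟫) / (2 * r) := by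
  have hn : ‖t • xb‖ = t * r := by rw [norm_smul, Real.norm_of_nonneg ht0.le, hxb]
  have hle : ‖t • xb‖ ≤ r := by rw [hn]; nlinarith
  have hproj : ballProj r (t • xb) = t • xb := by rw [ballProj, if_pos hle]
  have hsub : t • xb - xb = (t - 1) • xb := by rw [sub_smul, one_smul]
  have hin : ⟪xb, xb⟫ = r ^ 2 := by
    rw [real_inner_self_eq_norm_sq, hxb]
  rw [coderivQuot, hproj, ballProj_self r xb hxb, hsub, norm_smul,
    Real.norm_of_nonpos (by linarith), hxb, real_inner_smul_right, real_inner_smul_right, hin]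
  rw [show (t - 1) * ⟪z, xb⟫ - (t - 1) * r ^ 2 = (1 - t) * (r ^ 2 - ⟪z, xb⟫) by ring,
    show -(t - 1) * r + -(t - 1) * r = (1 - t) * (2 * r) by ring,
    mul_div_mul_left _ _ (by linarith : (1 : ℝ) - t ≠ 0)]

/-- Corollary 3.2(III)(c): for `‖xb‖ = r`, `D̂*P_{rB}(xb)(xb) = ∅`. -/
theorem stmt13 (r : ℝ) (hr : 0 < r) (xb : H) (hxb : ‖xb‖ = r) :
    {z : H | Filter.limsup (coderivQuot r xb z xb) (nhdsWithin xb {xb}ᶜ) ≤ (0 : ℝ)}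
      = ∅ := by
  ext z
  simp only [Set.mem_setOf_eq, Set.mem_empty_iff_false, iff_false]
  intro h
  have hxbne : xb ≠ 0 := by
    intro h0; rw [h0, norm_zero] at hxb; exact hr.ne hxb
  set l := nhdsWithin xb ({xb}ᶜ : Set H) with hl
  set a := (⟪z, xb⟫ : ℝ) with ha
  -- boundedness above
  have hbd : IsBoundedUnder (· ≤ ·) l (coderivQuot r xb z xb) := by
    refine isBoundedUnder_of ⟨‖z‖ + ‖xb‖, fun u => ?_⟩
    set d := ‖u - xb‖ + ‖ballProj r u - ballProj r xb‖ with hd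
    have hd0 : 0 ≤ d := by positivity
    rcases eq_or_lt_of_le hd0 with hde | hdp
    · rw [coderivQuot, ← hd, ← hde, div_zero]; positivity
    · rw [coderivQuot, ← hd, div_le_iff₀ hdp]
      have h1 : ⟪z, u - xb⟫ ≤ ‖z‖ * ‖u - xb‖ := real_inner_le_norm _ _
      have h2 : -⟪xb, ballProj r u - ballProj r xb⟫ ≤ ‖xb‖ * ‖ballProj r u - ballProj r xb‖ := by
        rw [← inner_neg_right]
        calc ⟪xb, -(ballProj r u - ballProj r xb)⟫ ≤ ‖xb‖ * ‖-(ballProj r u - ballProj r xb)‖ :=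
          real_inner_le_norm _ _
        _ = ‖xb‖ * ‖ballProj r u - ballProj r xb‖ := by rw [norm_neg]
      have hz : 0 ≤ ‖z‖ := norm_nonneg _
      have hx : 0 ≤ ‖xb‖ := norm_nonneg _
      have hn1 : 0 ≤ ‖u - xb‖ := norm_nonneg _
      have hn2 : 0 ≤ ‖ballProj r u - ballProj r xb‖ := norm_nonneg _
      nlinarith
  -- tendsto maps
  have hcont : Continuous fun t : ℝ => t • xb := by continuity
  have htend : Filter.Tendsto (fun t : ℝ => t • xb) (nhds 1) (nhds xb) := by
    have := hcont.tendsto 1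
    simpa using this
  have hmap : ∀ (s : Set ℝ), (∀ t ∈ s, t ≠ 1) →
      Filter.Tendsto (fun t : ℝ => t • xb) (nhdsWithin 1 s) l := by
    intro s hs
    apply tendsto_nhdsWithin_of_tendsto_nhds_of_eventually_within
    · exact htend.mono_left nhdsWithin_le_nhds
    · filter_upwards [self_mem_nhdsWithin] with t ht
      simp only [Set.mem_compl_iff, Set.mem_singleton_iff]
      intro heq
      apply hs t ht
      have : (t - 1) • xb = 0 := by rw [sub_smul, one_smul, heq, sub_self]
      rcases smul_eq_zero.1 this with h' | h'
      · linarith [sub_eq_zero.1 h']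
      · exact absurd h' hxbne
  have h1 : a / r ≤ 0 := by
    refine le_trans (le_limsup_of_frequently_le ?_ hbd) h
    have hT := hmap (Set.Ioi 1) (fun t ht => ne_of_gt ht)
    refine hT.frequently ?_
    refine Filter.Frequently.mono ?_ (fun t (ht : coderivQuot r xb z xb (t • xb) = a / r) => ht.ge)
    refine (Filter.Eventually.frequently ?_)
    filter_upwards [self_mem_nhdsWithin] with t ht
    exact quot_gt r hr xb z hxb ht
  have h2 : (r ^ 2 - a) / (2 * r) ≤ 0 := by
    refine le_trans (le_limsup_of_frequently_le ?_ hbd) h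
    have hT := hmap (Set.Iio 1) (fun t ht => ne_of_lt ht)
    refine hT.frequently ?_
    refine Filter.Frequently.mono ?_
      (fun t (ht : coderivQuot r xb z xb (t • xb) = (r ^ 2 - a) / (2 * r)) => ht.ge)
    refine Filter.Eventually.frequently ?_
    have hpos : ∀ᶠ t : ℝ in nhdsWithin 1 (Set.Iio 1), 0 < t :=
      Filter.Eventually.filter_mono nhdsWithin_le_nhds (eventually_gt_nhds one_pos)
    filter_upwards [self_mem_nhdsWithin, hpos] with t ht htp
    exact quot_lt r hr xb z hxb htp ht
  have ha1 : a ≤ 0 := by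
    by_contra hc
    push_neg at hc
    have : 0 < a / r := div_pos hc hr
    linarith
  have ha2 : r ^ 2 ≤ a := by
    by_contra hc
    push_neg at hc
    have : 0 < (r ^ 2 - a) / (2 * r) := div_pos (by linarith) (by linarith)
    linarith
  nlinarith
end

section
/- Let 1 < p < ∞, let M ⊆ ℕ, and for x ∈ ℓ^p let x_M denote the sequence equal to x on M and 0 off M. For r > 0 let rC_M = {x ∈ ℓ^p : ‖x_M‖_p ≤ r}. Then rC_M is a closed convex subset of ℓ^p, and the metric projection onto rC_M is given by P_{rC_M}(x) = x when ‖x_M‖_p ≤ r, and P_{rC_M}(x) = (r/‖x_M‖_p) x_M + x_{M̄} when ‖x_M‖_p > r, where M̄ = ℕ \ M. -/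
open scoped ENNReal Classical

/-- The restriction of `x ∈ ℓ^p` to a set `M` of indices (zero off `M`), as an element of
`ℓ^p`. -/
noncomputable def lpRestr (p : ℝ≥0∞) (hp : 0 < p.toReal) (M : Set ℕ)
    (x : lp (fun _ : ℕ => ℝ) p) : lp (fun _ : ℕ => ℝ) p :=
  ⟨fun i => if i ∈ M then x i else 0, memℓp_gen <| by
    refine Summable.of_nonneg_of_le (fun i => Real.rpow_nonneg (norm_nonneg _) _)
      (fun i => ?_) ((lp.memℓp x).summable hp)
    by_cases h : i ∈ M
    · simp [h]
    · simp only [h, if_false, norm_zero]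
      rw [Real.zero_rpow hp.ne']
      exact Real.rpow_nonneg (norm_nonneg _) _⟩

section helpers

variable (p : ℝ≥0∞) [Fact (1 ≤ p)] (hp0 : 0 < p.toReal) (M : Set ℕ)

lemma lpRestr_apply (x : lp (fun _ : ℕ => ℝ) p) (i : ℕ) :
    lpRestr p hp0 M x i = if i ∈ M then x i else 0 := rfl

lemma lpRestr_add (x y : lp (fun _ : ℕ => ℝ) p) :
    lpRestr p hp0 M (x + y) = lpRestr p hp0 M x + lpRestr p hp0 M y := by
  apply lp.ext; funext i
  simp only [lp.coeFn_add, Pi.add_apply, lpRestr_apply]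
  by_cases h : i ∈ M <;> simp [h]

lemma lpRestr_sub (x y : lp (fun _ : ℕ => ℝ) p) :
    lpRestr p hp0 M (x - y) = lpRestr p hp0 M x - lpRestr p hp0 M y := by
  apply lp.ext; funext i
  simp only [lp.coeFn_sub, Pi.sub_apply, lpRestr_apply]
  by_cases h : i ∈ M <;> simp [h]

lemma lpRestr_smul (c : ℝ) (x : lp (fun _ : ℕ => ℝ) p) :
    lpRestr p hp0 M (c • x) = c • lpRestr p hp0 M x := by
  apply lp.ext; funext i
  simp only [lp.coeFn_smul, Pi.smul_apply, lpRestr_apply]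
  by_cases h : i ∈ M <;> simp [h]

lemma lpRestr_idem (x : lp (fun _ : ℕ => ℝ) p) :
    lpRestr p hp0 M (lpRestr p hp0 M x) = lpRestr p hp0 M x := by
  apply lp.ext; funext i
  simp only [lpRestr_apply]
  by_cases h : i ∈ M <;> simp [h]

lemma lpRestr_compl (x : lp (fun _ : ℕ => ℝ) p) :
    lpRestr p hp0 M (lpRestr p hp0 Mᶜ x) = 0 := by
  apply lp.ext; funext i
  simp only [lpRestr_apply]
  by_cases h : i ∈ M <;> simp [h, lp.coeFn_zero]

lemma lpRestr_add_compl (x : lp (fun _ : ℕ => ℝ) p) :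
    lpRestr p hp0 M x + lpRestr p hp0 Mᶜ x = x := by
  apply lp.ext; funext i
  simp only [lp.coeFn_add, Pi.add_apply, lpRestr_apply]
  by_cases h : i ∈ M <;> simp [h]

lemma norm_lpRestr_le (hpt : p ≠ ⊤) (x : lp (fun _ : ℕ => ℝ) p) :
    ‖lpRestr p hp0 M x‖ ≤ ‖x‖ := by
  rw [lp.norm_eq_tsum_rpow hp0, lp.norm_eq_tsum_rpow hp0]
  refine Real.rpow_le_rpow (tsum_nonneg fun i => Real.rpow_nonneg (norm_nonneg _) _)
    (Summable.tsum_le_tsum (fun i => ?_) ((lp.memℓp _).summable hp0) ((lp.memℓp x).summable hp0))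
    (by positivity)
  rw [lpRestr_apply]
  by_cases h : i ∈ M
  · simp [h]
  · simp only [h, if_false, norm_zero, Real.zero_rpow hp0.ne']
    exact Real.rpow_nonneg (norm_nonneg _) _

lemma lipschitz_lpRestr (hpt : p ≠ ⊤) :
    LipschitzWith 1 (lpRestr p hp0 M) := by
  refine LipschitzWith.of_dist_le_mul fun x y => ?_
  rw [dist_eq_norm, dist_eq_norm, ← lpRestr_sub]
  simpa using norm_lpRestr_le p hp0 M hpt (x - y)

end helpers

/-- Lemma 4.2 of [15]: `rC_M = {x ∈ ℓ^p : ‖x_M‖ ≤ r}` is closed and convex, and the metric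
projection onto it equals `x` when `‖x_M‖ ≤ r` and `(r/‖x_M‖) x_M + x_{M̄}` when `‖x_M‖ > r`. -/
theorem stmt14 (p : ℝ≥0∞) [Fact (1 ≤ p)] (hp : 1 < p) (hpt : p ≠ ⊤) (hp0 : 0 < p.toReal)
    (M : Set ℕ) (r : ℝ) (hr : 0 < r) :
    IsClosed {x : lp (fun _ : ℕ => ℝ) p | ‖lpRestr p hp0 M x‖ ≤ r} ∧
    Convex ℝ {x : lp (fun _ : ℕ => ℝ) p | ‖lpRestr p hp0 M x‖ ≤ r} ∧
    ∀ x : lp (fun _ : ℕ => ℝ) p,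
      (‖lpRestr p hp0 M x‖ ≤ r →
        ∀ z : lp (fun _ : ℕ => ℝ) p, ‖lpRestr p hp0 M z‖ ≤ r → ‖x - x‖ ≤ ‖x - z‖) ∧
      (r < ‖lpRestr p hp0 M x‖ →
        ‖lpRestr p hp0 M
            ((r / ‖lpRestr p hp0 M x‖) • lpRestr p hp0 M x + lpRestr p hp0 Mᶜ x)‖ ≤ r ∧
        ∀ z : lp (fun _ : ℕ => ℝ) p, ‖lpRestr p hp0 M z‖ ≤ r →
          ‖x - ((r / ‖lpRestr p hp0 M x‖) • lpRestr p hp0 M x + lpRestr p hp0 Mᶜ x)‖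
            ≤ ‖x - z‖) := by
  refine ⟨?_, ?_, ?_⟩
  · have : {x : lp (fun _ : ℕ => ℝ) p | ‖lpRestr p hp0 M x‖ ≤ r} =
        (fun x => ‖lpRestr p hp0 M x‖) ⁻¹' Set.Iic r := rfl
    rw [this]
    exact IsClosed.preimage
      (continuous_norm.comp (lipschitz_lpRestr p hp0 M hpt).continuous) isClosed_Iic
  · intro x hx y hy a b ha hb hab
    simp only [Set.mem_setOf_eq] at hx hy ⊢
    rw [lpRestr_add, lpRestr_smul, lpRestr_smul]
    calc ‖a • lpRestr p hp0 M x + b • lpRestr p hp0 M y‖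
        ≤ ‖a • lpRestr p hp0 M x‖ + ‖b • lpRestr p hp0 M y‖ := norm_add_le _ _
      _ = a * ‖lpRestr p hp0 M x‖ + b * ‖lpRestr p hp0 M y‖ := by
          rw [norm_smul, norm_smul, Real.norm_of_nonneg ha, Real.norm_of_nonneg hb]
      _ ≤ a * r + b * r := by
          gcongr
      _ = r := by rw [← add_mul, hab, one_mul]
  · intro x
    constructor
    · intro _ z _
      simp only [sub_self, norm_zero]
      exact norm_nonneg _
    · intro hx
      set c : ℝ := r / ‖lpRestr p hp0 M x‖ with hc
      have hnx : 0 < ‖lpRestr p hp0 M x‖ := hr.trans hx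
      have hc0 : 0 < c := div_pos hr hnx
      have hc1 : c < 1 := (div_lt_one hnx).2 hx
      have hcn : c * ‖lpRestr p hp0 M x‖ = r := div_mul_cancel₀ r hnx.ne'
      have hrestr : lpRestr p hp0 M (c • lpRestr p hp0 M x + lpRestr p hp0 Mᶜ x) =
          c • lpRestr p hp0 M x := by
        rw [lpRestr_add, lpRestr_smul, lpRestr_idem, lpRestr_compl, add_zero]
      constructor
      · rw [hrestr, norm_smul, Real.norm_of_nonneg hc0.le, hcn]
      · intro z hz
        have hxy : x - (c • lpRestr p hp0 M x + lpRestr p hp0 Mᶜ x) =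
            (1 - c) • lpRestr p hp0 M x := by
          nth_rewrite 1 [← lpRestr_add_compl p hp0 M x]
          rw [sub_smul, one_smul]
          abel
        have h1 : ‖x - (c • lpRestr p hp0 M x + lpRestr p hp0 Mᶜ x)‖ =
            ‖lpRestr p hp0 M x‖ - r := by
          rw [hxy, norm_smul, Real.norm_of_nonneg (by linarith), sub_mul, one_mul, hcn]
        rw [h1]
        calc ‖lpRestr p hp0 M x‖ - r
            ≤ ‖lpRestr p hp0 M x‖ - ‖lpRestr p hp0 M z‖ := by linarith
          _ ≤ ‖lpRestr p hp0 M x - lpRestr p hp0 M z‖ := norm_sub_norm_le _ _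
          _ = ‖lpRestr p hp0 M (x - z)‖ := by rw [lpRestr_sub]
          _ ≤ ‖x - z‖ := norm_lpRestr_le p hp0 M hpt _
end

section
/- Let (S, 𝒜, μ) be a measure space, 1 < p, q < ∞ with 1/p + 1/q = 1, and let J : L^p → L^q be the normalized duality mapping J(f)(s) = |f(s)|^{p−2} f(s)/‖f‖_p^{p−2} for f ≠ 0. Then for every f ∈ L^p \ {0} with f⁺ ≠ 0, the positive part of J(f) satisfies (J(f))⁺ = (‖f⁺‖_p^{p−2}/‖f‖_p^{p−2}) J(f⁺). -/
open MeasureTheory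
open scoped ENNReal

/-- Lemma 5.1(d): for `f ∈ L^p \ {0}` with `f⁺ ≠ 0`, the positive part of `J(f)` equals
`(‖f⁺‖^{p−2}/‖f‖^{p−2}) J(f⁺)`, where `J(g)(s) = |g(s)|^{p−2} g(s)/‖g‖^{p−2}`. -/
theorem stmt17 {S : Type*} [MeasurableSpace S] (μ : Measure S) (p : ℝ≥0∞) [Fact (1 ≤ p)]
    (hp : 1 < p.toReal) (hpt : p ≠ ⊤) (f : Lp ℝ p μ) (hf : f ≠ 0)
    (hf' : Lp.posPart f ≠ 0) :
    ∀ᵐ s ∂μ,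
      max (|f s| ^ (p.toReal - 2) * f s / ‖f‖ ^ (p.toReal - 2)) 0 =
        (‖Lp.posPart f‖ ^ (p.toReal - 2) / ‖f‖ ^ (p.toReal - 2)) *
          (|Lp.posPart f s| ^ (p.toReal - 2) * Lp.posPart f s /
            ‖Lp.posPart f‖ ^ (p.toReal - 2)) := by
  set a : ℝ := p.toReal - 2 with ha
  have hfn : (0:ℝ) < ‖f‖ := norm_pos_iff.mpr hf
  have hgn : (0:ℝ) < ‖Lp.posPart f‖ := norm_pos_iff.mpr hf'
  have hc : (0:ℝ) < ‖f‖ ^ a := Real.rpow_pos_of_pos hfn a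
  have hb : (0:ℝ) < ‖Lp.posPart f‖ ^ a := Real.rpow_pos_of_pos hgn a
  filter_upwards [Lp.coeFn_posPart f] with s hs
  rw [hs]
  rcases le_or_gt (f s) 0 with hx | hx
  · have hm : max (f s) 0 = 0 := max_eq_right hx
    rw [hm]
    have hnum : |f s| ^ a * f s ≤ 0 :=
      mul_nonpos_of_nonneg_of_nonpos (Real.rpow_nonneg (abs_nonneg _) a) hx
    rw [max_eq_right (div_nonpos_of_nonpos_of_nonneg hnum hc.le)]
    simp
  · have hm : max (f s) 0 = f s := max_eq_left hx.le
    rw [hm]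
    have hnum : 0 ≤ |f s| ^ a * f s / ‖f‖ ^ a :=
      div_nonneg (mul_nonneg (Real.rpow_nonneg (abs_nonneg _) a) hx.le) hc.le
    rw [max_eq_left hnum]
    field_simp
end

section
/- Let (S, 𝒜, μ) be a measure space, 1 < p < ∞, K_p the positive cone of L^p(S,μ), and P_{K_p}(f) = f⁺ the metric projection onto K_p. For every f ∈ K_p (i.e., f ≥ 0 a.e.) and every h ∈ L^p, one has limsup_{h → f} (⟨J(f), h − f⟩ − ⟨J(f), h⁺ − f⁺⟩)/(‖h − f‖_p + ‖h⁺ − f⁺‖_p) ≤ 0; equivalently, J(f) ∈ D̂*P_{K_p}(f)(J(f)), where D̂* is the Mordukhovich (Fréchet) coderivative and J the normalized duality mapping of L^p. -/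
open MeasureTheory Filter
open scoped ENNReal

/-
Since `f ≥ 0`, `f⁺ = f`, and `h ≤ h⁺` pointwise; as `J(f) ≥ 0` lies in the dual space
`L^{p/(p-1)}`, integrating gives `⟨J(f), h - f⟩ ≤ ⟨J(f), h⁺ - f⁺⟩` for every `h`, so the
quotient under the `limsup` is nonpositive everywhere.
-/

/-- No boundedness assumption is needed: in `ℝ`, `sInf` of a set unbounded below is `0`. -/
lemma Real.limsup_le_of_eventually_le {α : Type*} {l : Filter α} {u : α → ℝ} {c : ℝ}
    (hc : 0 ≤ c) (h : ∀ᶠ x in l, u x ≤ c) : limsup u l ≤ c := by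
  rw [limsup_eq]
  by_cases hb : BddBelow {a : ℝ | ∀ᶠ x in l, u x ≤ a}
  · exact csInf_le hb h
  · rwa [Real.sInf_of_not_bddBelow hb]

lemma ENNReal.HolderConjugate.div_sub_one {p : ℝ≥0∞} (hp : 1 ≤ p) (hpt : p ≠ ⊤) :
    p.HolderConjugate (p / (p - 1)) := by
  have hp0 : p ≠ 0 := (zero_lt_one.trans_le hp).ne'
  rw [ENNReal.holderConjugate_iff, ENNReal.inv_div (.inr hpt) (.inr hp0), ← one_div,
    ENNReal.div_add_div_same, add_tsub_cancel_of_le hp, ENNReal.div_self hp0 hpt]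

lemma Real.norm_abs_rpow_mul_le (x a : ℝ) : ‖|x| ^ a * x‖ ≤ ‖x‖ ^ (a + 1) := by
  rw [norm_mul, Real.norm_eq_abs, Real.norm_eq_abs,
    abs_of_nonneg (Real.rpow_nonneg (abs_nonneg x) a)]
  simpa only [Real.rpow_one] using Real.le_rpow_add (abs_nonneg x) a 1

lemma MeasureTheory.MemLp.abs_rpow_sub_two_mul_div {S : Type*} [MeasurableSpace S]
    {μ : Measure S} {p : ℝ≥0∞} {F : S → ℝ} (hF : MemLp F p μ) (hp : 1 ≤ p) (hpt : p ≠ ⊤)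
    (c : ℝ) : MemLp (fun s => |F s| ^ (p.toReal - 2) * F s / c) (p / (p - 1)) μ := by
  have hmeas : AEStronglyMeasurable (fun s => |F s| ^ (p.toReal - 2) * F s) μ :=
    ((hF.1.aemeasurable.abs.pow_const _).mul hF.1.aemeasurable).aestronglyMeasurable
  have hbound : MemLp (fun s => |F s| ^ (p.toReal - 2) * F s) (p / (p - 1)) μ := by
    refine (hF.norm_rpow_div (p - 1)).of_le hmeas (Eventually.of_forall fun s => ?_)
    refine (Real.norm_abs_rpow_mul_le _ _).trans_eq ?_
    rw [ENNReal.toReal_sub_of_le hp hpt, ENNReal.toReal_one,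
      Real.norm_of_nonneg (Real.rpow_nonneg (norm_nonneg _) _)]
    congr 1; ring
  simpa only [div_eq_mul_inv] using hbound.mul_const c⁻¹

lemma MeasureTheory.Lp.integral_mul_sub_le_integral_mul_posPart_sub {S : Type*}
    [MeasurableSpace S] {μ : Measure S} {p q : ℝ≥0∞} [Fact (1 ≤ p)] [p.HolderConjugate q]
    {φ : S → ℝ} (hφ : MemLp φ q μ) (hφ0 : 0 ≤ᵐ[μ] φ) {f : Lp ℝ p μ} (hf : 0 ≤ f)
    (h : Lp ℝ p μ) :
    ∫ s, φ s * (h s - f s) ∂μ ≤ ∫ s, φ s * (Lp.posPart h s - Lp.posPart f s) ∂μ := by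
  refine integral_mono_ae (hφ.integrable_mul ((Lp.memLp h).sub (Lp.memLp f)))
    (hφ.integrable_mul ((Lp.memLp _).sub (Lp.memLp _))) ?_
  filter_upwards [hφ0, (Lp.coeFn_nonneg f).mpr hf, Lp.coeFn_posPart h, Lp.coeFn_posPart f]
    with s hφs hfs hhs hfs'
  rw [hhs, hfs', max_eq_left (show (0 : ℝ) ≤ f s from hfs)]
  exact mul_le_mul_of_nonneg_left (sub_le_sub_right (le_max_left _ _) _) hφs

theorem stmt19_general {S : Type*} [MeasurableSpace S] (μ : Measure S) (p : ℝ≥0∞) [Fact (1 ≤ p)]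
    (hpt : p ≠ ⊤) (f : Lp ℝ p μ) (hf : 0 ≤ f) :
    Filter.limsup (fun h : Lp ℝ p μ =>
        ((∫ s, (|f s| ^ (p.toReal - 2) * f s / ‖f‖ ^ (p.toReal - 2)) * (h s - f s) ∂μ) -
          (∫ s, (|f s| ^ (p.toReal - 2) * f s / ‖f‖ ^ (p.toReal - 2)) *
            (Lp.posPart h s - Lp.posPart f s) ∂μ)) /
          (‖h - f‖ + ‖Lp.posPart h - Lp.posPart f‖))
      (nhdsWithin f {f}ᶜ) ≤ (0 : ℝ) := by
  have hp : 1 ≤ p := Fact.out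
  have := ENNReal.HolderConjugate.div_sub_one hp hpt
  have hJ := (Lp.memLp f).abs_rpow_sub_two_mul_div hp hpt (‖f‖ ^ (p.toReal - 2))
  have hJ0 : 0 ≤ᵐ[μ] fun s => |f s| ^ (p.toReal - 2) * f s / ‖f‖ ^ (p.toReal - 2) := by
    filter_upwards [(Lp.coeFn_nonneg f).mpr hf] with s hfs
    have : (0 : ℝ) ≤ f s := hfs
    positivity
  refine Real.limsup_le_of_eventually_le le_rfl (Eventually.of_forall fun h => ?_)
  exact div_nonpos_of_nonpos_of_nonneg
    (sub_nonpos.mpr (Lp.integral_mul_sub_le_integral_mul_posPart_sub hJ hJ0 hf h))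
    (by positivity)

/-- Theorem 5.2(c): for `f` in the positive cone of `L^p`,
`J(f) ∈ D̂*P_{K_p}(f)(J(f))`, i.e. the coderivative limsup is `≤ 0`, where
`P_{K_p}(h) = h⁺` and `J(f)(s) = |f(s)|^{p−2} f(s)/‖f‖^{p−2}`. -/
theorem stmt19 {S : Type*} [MeasurableSpace S] (μ : Measure S) (p : ℝ≥0∞) [Fact (1 ≤ p)]
    (hp : 1 < p.toReal) (hpt : p ≠ ⊤) (f : Lp ℝ p μ) (hf : 0 ≤ f) :
    Filter.limsup (fun h : Lp ℝ p μ =>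
        ((∫ s, (|f s| ^ (p.toReal - 2) * f s / ‖f‖ ^ (p.toReal - 2)) * (h s - f s) ∂μ) -
          (∫ s, (|f s| ^ (p.toReal - 2) * f s / ‖f‖ ^ (p.toReal - 2)) *
            (Lp.posPart h s - Lp.posPart f s) ∂μ)) /
          (‖h - f‖ + ‖Lp.posPart h - Lp.posPart f‖))
      (nhdsWithin f {f}ᶜ) ≤ (0 : ℝ) :=
  stmt19_general μ p hpt f hf
end
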